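/- arXiv:1210.7470 — 2 statements merged into one kernel-verified Lean document; each statement's English description precedes it below -/
import Mathlib

section
/- Fix r ≥ 2 and t ≥ 1, and let n ≥ 2r with n ≥ r + t + 1. Then C(n−2,r−2)/(C(n−1,r−1) − C(n−1−t,r−1)) ≤ x/(1 − (1−x)^t), where x = (r−1)/(n−1). Moreover, for fixed r and t, the quantity C(n−2,r−2)/(C(n−1,r−1) − C(n−1−t,r−1)) is decreasing in n and tends to 1/t as n → ∞. -/
open Finset

/-- The `i`-th smallest element of a finite set of naturals (1-indexed);
    `0` if out of range. -/
def nthEl (A : Finset ℕ) (i : ℕ) : ℕ := (A.sort (· ≤ ·)).getD (i - 1) 0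

/-- `A ≺ C` : `C = {c_1 < ⋯ < c_k}` with `k ≤ |A|` and `a_i ≤ c_i` for `1 ≤ i ≤ k`. -/
def SetPrec (A C : Finset ℕ) : Prop :=
  C.card ≤ A.card ∧ ∀ i ∈ Finset.Icc 1 C.card, nthEl A i ≤ nthEl C i

instance (A C : Finset ℕ) : Decidable (SetPrec A C) := by
  unfold SetPrec; infer_instance

/-- The compression order: `A ≤ B` for sets of the same size, `a_i ≤ b_i` for all `i`. -/
def SetLE (A B : Finset ℕ) : Prop :=
  A.card = B.card ∧ ∀ i ∈ Finset.Icc 1 A.card, nthEl A i ≤ nthEl B i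

instance (A B : Finset ℕ) : Decidable (SetLE A B) := by
  unfold SetLE; infer_instance

/-- `Binom([n], r)`: the family of `r`-element subsets of `[n] = {1, …, n}`. -/
def binomF (n r : ℕ) : Finset (Finset ℕ) := (Finset.Icc 1 n).powersetCard r

/-- `𝒜(X) = {A ∈ 𝒜 : A ∩ X ≠ ∅}`. -/
def famX (𝒜 : Finset (Finset ℕ)) (X : Finset ℕ) : Finset (Finset ℕ) :=
  𝒜.filter fun A => (A ∩ X).Nonempty

/-- The star `𝒮_{n,r} = {A ∈ Binom([n],r) : 1 ∈ A}`. -/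
def starF (n r : ℕ) : Finset (Finset ℕ) := (binomF n r).filter fun A => 1 ∈ A

/-- A family is intersecting if any two members meet. -/
def IntersectingF (𝒜 : Finset (Finset ℕ)) : Prop :=
  ∀ A ∈ 𝒜, ∀ B ∈ 𝒜, (A ∩ B).Nonempty

/-- A family `𝒜 ⊆ Binom([n],r)` is compressed if `A ∈ 𝒜`, `B ∈ Binom([n],r)`, `B ≤ A`
    imply `B ∈ 𝒜`. -/
def CompressedF (n r : ℕ) (𝒜 : Finset (Finset ℕ)) : Prop :=
  ∀ A ∈ 𝒜, ∀ B ∈ binomF n r, SetLE B A → B ∈ 𝒜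

/-- `F(r, n, 𝒢) = {A ∈ Binom([n],r) : A ≺ G for some G ∈ 𝒢}`. -/
def genF (r n : ℕ) (𝒢 : Finset (Finset ℕ)) : Finset (Finset ℕ) :=
  (binomF n r).filter fun A => ∃ G ∈ 𝒢, SetPrec A G

/-- `𝒜_{n,r,s} = F(r, n, {[s, 2s-1]})`. -/
def Anrs (n r s : ℕ) : Finset (Finset ℕ) := genF r n {Finset.Icc s (2 * s - 1)}

/-- `X ⊆ [2,n]` is EKR for parameters `(n, r)` if `|𝒜(X)| ≤ |𝒮_{n,r}(X)|` for every
    compressed intersecting family `𝒜 ⊆ Binom([n],r)`. -/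
def IsEKR (n r : ℕ) (X : Finset ℕ) : Prop :=
  X ⊆ Finset.Icc 2 n ∧
  ∀ 𝒜 ⊆ binomF n r, CompressedF n r 𝒜 → IntersectingF 𝒜 →
    (famX 𝒜 X).card ≤ (famX (starF n r) X).card

/-- `X` is eventually EKR for `r` if it is EKR for `(n, r)` for all sufficiently large `n`. -/
def EventuallyEKR (r : ℕ) (X : Finset ℕ) : Prop :=
  ∃ N : ℕ, ∀ n ≥ N, IsEKR n r X

/-- `A` and `B` (r-element subsets of `[n]`) are cross intersecting if `C ∩ D ≠ ∅`
    for every `C ≤ A` and `D ≤ B`. -/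
def CrossInt (n r : ℕ) (A B : Finset ℕ) : Prop :=
  ∀ C ∈ binomF n r, ∀ D ∈ binomF n r, SetLE C A → SetLE D B → (C ∩ D).Nonempty

open Filter

lemma srb_sumId (m k t : ℕ) :
    Nat.choose (m + t) (k + 1)
      = Nat.choose m (k + 1) + ∑ j ∈ Finset.range t, Nat.choose (m + j) k := by
  induction t with
  | zero => simp
  | succ t ih =>
    rw [Finset.sum_range_succ, show m + (t + 1) = (m + t) + 1 by ring,
      Nat.choose_succ_succ, ih]
    ring

lemma srb_cross (a m k : ℕ) (h : m ≤ a) :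
    Nat.choose (a + 1) k * Nat.choose m k ≤ Nat.choose a k * Nat.choose (m + 1) k := by
  rcases lt_or_ge m k with hk | hk
  · simp [Nat.choose_eq_zero_of_lt hk]
  · obtain ⟨μ, rfl⟩ : ∃ μ, m = k + μ := ⟨m - k, by omega⟩
    obtain ⟨α, rfl⟩ : ∃ α, a = k + α := ⟨a - k, by omega⟩
    have hμα : μ ≤ α := by omega
    have h1 := Nat.choose_mul_succ_eq (k + α) k
    have h2 := Nat.choose_mul_succ_eq (k + μ) k
    rw [show k + α + 1 - k = α + 1 by omega] at h1
    rw [show k + μ + 1 - k = μ + 1 by omega] at h2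
    have hpos : 0 < (α + 1) * (μ + 1) := by positivity
    refine Nat.le_of_mul_le_mul_right ?_ hpos
    have key : (k + α + 1) * (μ + 1) ≤ (α + 1) * (k + μ + 1) := by nlinarith
    calc Nat.choose (k + α + 1) k * Nat.choose (k + μ) k * ((α + 1) * (μ + 1))
        = (Nat.choose (k + α + 1) k * (α + 1)) * (Nat.choose (k + μ) k * (μ + 1)) := by ring
      _ = (Nat.choose (k + α) k * (k + α + 1)) * (Nat.choose (k + μ) k * (μ + 1)) := by
          rw [← h1]
      _ = (Nat.choose (k + α) k * Nat.choose (k + μ) k) * ((k + α + 1) * (μ + 1)) := by ring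
      _ ≤ (Nat.choose (k + α) k * Nat.choose (k + μ) k) * ((α + 1) * (k + μ + 1)) :=
          Nat.mul_le_mul_left _ key
      _ = (Nat.choose (k + α) k * (Nat.choose (k + μ) k * (k + μ + 1))) * (α + 1) := by ring
      _ = (Nat.choose (k + α) k * (Nat.choose (k + μ + 1) k * (μ + 1))) * (α + 1) := by
          rw [h2]
      _ = Nat.choose (k + α) k * Nat.choose (k + μ + 1) k * ((α + 1) * (μ + 1)) := by ring

lemma srb_expBound (N k : ℕ) (hN : k + 1 ≤ N) (s : ℕ) :
    (Nat.choose (N - s) (k + 1) : ℝ)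
      ≤ (1 - ((k : ℝ) + 1) / N) ^ s * Nat.choose N (k + 1) := by
  have hN0 : (0 : ℝ) < N := by exact_mod_cast (show 0 < N by omega)
  have hx : 0 ≤ 1 - ((k : ℝ) + 1) / N := by
    rw [sub_nonneg, div_le_one hN0]
    exact_mod_cast hN
  induction s with
  | zero => simp
  | succ s ih =>
    rcases lt_or_ge (N - s) (k + 2) with hm | hm
    · have h0 : Nat.choose (N - (s + 1)) (k + 1) = 0 :=
        Nat.choose_eq_zero_of_lt (by omega)
      rw [h0]
      push_cast
      positivity
    · have hm1 : N - (s + 1) = (N - s) - 1 := by omega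
      set m := N - s with hmdef
      have hm0 : (0 : ℝ) < m := by exact_mod_cast (show 0 < m by omega)
      have hid := Nat.choose_mul_succ_eq (m - 1) (k + 1)
      rw [show m - 1 + 1 = m by omega] at hid
      have hcast : (Nat.choose (m - 1) (k + 1) : ℝ) * m
          = Nat.choose m (k + 1) * ((m : ℝ) - ((k : ℝ) + 1)) := by
        have := congrArg (fun x : ℕ => (x : ℝ)) hid
        push_cast [Nat.cast_sub (show k + 1 ≤ m by omega)] at this
        linarith
      have e1 : (Nat.choose (m - 1) (k + 1) : ℝ)
          = Nat.choose m (k + 1) * (1 - ((k : ℝ) + 1) / m) := by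
        field_simp
        linarith
      have hfac : 1 - ((k : ℝ) + 1) / m ≤ 1 - ((k : ℝ) + 1) / N := by
        have hmn : (m : ℝ) ≤ N := by exact_mod_cast Nat.sub_le N s
        have := div_le_div_of_nonneg_left (show (0:ℝ) ≤ (k:ℝ) + 1 by positivity) hm0 hmn
        linarith
      calc (Nat.choose (N - (s + 1)) (k + 1) : ℝ)
          = Nat.choose m (k + 1) * (1 - ((k : ℝ) + 1) / m) := by rw [hm1, e1]
        _ ≤ Nat.choose m (k + 1) * (1 - ((k : ℝ) + 1) / N) :=
            mul_le_mul_of_nonneg_left hfac (by positivity)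
        _ ≤ ((1 - ((k : ℝ) + 1) / N) ^ s * Nat.choose N (k + 1)) * (1 - ((k : ℝ) + 1) / N) :=
            mul_le_mul_of_nonneg_right ih hx
        _ = (1 - ((k : ℝ) + 1) / N) ^ (s + 1) * Nat.choose N (k + 1) := by ring

lemma srb_denomEq (k t n : ℕ) (h : t + 2 ≤ n) :
    (Nat.choose (n - 1) (k + 1) : ℝ) - Nat.choose (n - 1 - t) (k + 1)
      = ∑ j ∈ Finset.range t, (Nat.choose (n - 2 - j) k : ℝ) := by
  have hid := srb_sumId (n - 1 - t) k t
  rw [show n - 1 - t + t = n - 1 by omega] at hid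
  have hcast : (Nat.choose (n - 1) (k + 1) : ℝ)
      = Nat.choose (n - 1 - t) (k + 1) + ∑ j ∈ Finset.range t, (Nat.choose (n - 1 - t + j) k : ℝ) := by
    exact_mod_cast hid
  have hre : ∑ j ∈ Finset.range t, (Nat.choose (n - 2 - j) k : ℝ)
      = ∑ j ∈ Finset.range t, (Nat.choose (n - 1 - t + j) k : ℝ) := by
    rw [← Finset.sum_range_reflect]
    refine Finset.sum_congr rfl fun j hj => ?_
    have hjt : j < t := Finset.mem_range.mp hj
    congr 2
    omega
  rw [hcast, hre]
  ring

lemma srb_ratio_one (k : ℕ) :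
    Tendsto (fun m : ℕ => (Nat.choose m k : ℝ) / Nat.choose (m + 1) k) atTop (nhds 1) := by
  have h0 : Tendsto (fun m : ℕ => (k : ℝ) / ((m : ℝ) + 1)) atTop (nhds 0) :=
    Tendsto.div_atTop tendsto_const_nhds
      (tendsto_atTop_add_const_right _ 1 tendsto_natCast_atTop_atTop)
  have h1 : Tendsto (fun m : ℕ => 1 - (k : ℝ) / ((m : ℝ) + 1)) atTop (nhds 1) := by
    simpa using tendsto_const_nhds.sub h0
  refine h1.congr' ?_
  filter_upwards [eventually_ge_atTop k] with m hm
  have hpos : (0 : ℝ) < Nat.choose (m + 1) k := by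
    exact_mod_cast Nat.choose_pos (by omega)
  have hid := Nat.choose_mul_succ_eq m k
  have hcast : (Nat.choose m k : ℝ) * ((m : ℝ) + 1)
      = Nat.choose (m + 1) k * ((m : ℝ) + 1 - k) := by
    have := congrArg (fun x : ℕ => (x : ℝ)) hid
    push_cast [Nat.cast_sub (show k ≤ m + 1 by omega)] at this
    linarith
  have hm1 : ((m : ℝ) + 1) ≠ 0 := by positivity
  field_simp
  linarith

lemma srb_ratio_c (k c : ℕ) :
    Tendsto (fun m : ℕ => (Nat.choose m k : ℝ) / Nat.choose (m + c) k) atTop (nhds 1) := by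
  induction c with
  | zero =>
    refine Tendsto.congr' ?_ (tendsto_const_nhds (x := (1:ℝ)) (f := atTop))
    filter_upwards [eventually_ge_atTop k] with m hm
    have hpos : (0 : ℝ) < Nat.choose m k := by exact_mod_cast Nat.choose_pos hm
    simp [div_self hpos.ne']
  | succ c ih =>
    have hstep : Tendsto (fun m : ℕ => (Nat.choose (m + c) k : ℝ) / Nat.choose (m + c + 1) k)
        atTop (nhds 1) := (srb_ratio_one k).comp (tendsto_add_atTop_nat c)
    have hmul := ih.mul hstep
    rw [mul_one] at hmul
    refine Tendsto.congr' ?_ hmul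
    filter_upwards [eventually_ge_atTop k] with m hm
    have hb : (Nat.choose (m + c) k : ℝ) ≠ 0 := by
      exact_mod_cast (Nat.choose_pos (by omega)).ne'
    rw [div_mul_div_comm, mul_comm ((Nat.choose (m + c) k : ℝ)) _, mul_div_mul_right _ _ hb,
      show m + c + 1 = m + (c + 1) by ring]

lemma srb_step (k t n : ℕ) (ht : 1 ≤ t) (hn : k + t + 3 ≤ n) :
    (Nat.choose (n + 1 - 2) k : ℝ) /
        ((Nat.choose (n + 1 - 1) (k + 1) : ℝ) - Nat.choose (n + 1 - 1 - t) (k + 1))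
      ≤ (Nat.choose (n - 2) k : ℝ) /
        ((Nat.choose (n - 1) (k + 1) : ℝ) - Nat.choose (n - 1 - t) (k + 1)) := by
  rw [srb_denomEq k t n (by omega), srb_denomEq k t (n + 1) (by omega)]
  have hpos1 : (0 : ℝ) < ∑ j ∈ Finset.range t, (Nat.choose (n + 1 - 2 - j) k : ℝ) := by
    refine Finset.sum_pos (fun j hj => ?_) (by simp [Finset.nonempty_range_iff]; omega)
    have hjt : j < t := Finset.mem_range.mp hj
    exact_mod_cast Nat.choose_pos (by omega)
  have hpos2 : (0 : ℝ) < ∑ j ∈ Finset.range t, (Nat.choose (n - 2 - j) k : ℝ) := by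
    refine Finset.sum_pos (fun j hj => ?_) (by simp [Finset.nonempty_range_iff]; omega)
    have hjt : j < t := Finset.mem_range.mp hj
    exact_mod_cast Nat.choose_pos (by omega)
  rw [div_le_div_iff₀ hpos1 hpos2]
  have hnat : Nat.choose (n + 1 - 2) k * (∑ j ∈ Finset.range t, Nat.choose (n - 2 - j) k)
      ≤ Nat.choose (n - 2) k * (∑ j ∈ Finset.range t, Nat.choose (n + 1 - 2 - j) k) := by
    rw [Finset.mul_sum, Finset.mul_sum]
    refine Finset.sum_le_sum fun j hj => ?_
    have hjt : j < t := Finset.mem_range.mp hj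
    have := srb_cross (n - 2) (n - 2 - j) k (by omega)
    rw [show n - 2 + 1 = n + 1 - 2 by omega, show n - 2 - j + 1 = n + 1 - 2 - j by omega] at this
    exact this
  calc (Nat.choose (n + 1 - 2) k : ℝ) * ∑ j ∈ Finset.range t, (Nat.choose (n - 2 - j) k : ℝ)
      = ((Nat.choose (n + 1 - 2) k * ∑ j ∈ Finset.range t, Nat.choose (n - 2 - j) k : ℕ) : ℝ) := by
        push_cast; ring
    _ ≤ ((Nat.choose (n - 2) k * ∑ j ∈ Finset.range t, Nat.choose (n + 1 - 2 - j) k : ℕ) : ℝ) := by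
        exact_mod_cast hnat
    _ = (Nat.choose (n - 2) k : ℝ) * ∑ j ∈ Finset.range t, (Nat.choose (n + 1 - 2 - j) k : ℝ) := by
        push_cast; ring

/-- Lemma `l.lastpart`: fix `r ≥ 2` and `t ≥ 1`.  For `n ≥ 2r` with
`n ≥ r + t + 1`, the ratio `C(n−2,r−2)/(C(n−1,r−1) − C(n−1−t,r−1))` is at most
`x/(1 − (1−x)^t)` where `x = (r−1)/(n−1)`; moreover this ratio is decreasing in `n`,
and it tends to `1/t` as `n → ∞`. -/
theorem star_ratio_bound (r t : ℕ) (hr : 2 ≤ r) (ht : 1 ≤ t) :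
    (∀ n : ℕ, 2 * r ≤ n → r + t + 1 ≤ n →
      (Nat.choose (n - 2) (r - 2) : ℝ) /
          ((Nat.choose (n - 1) (r - 1) : ℝ) - (Nat.choose (n - 1 - t) (r - 1) : ℝ)) ≤
        (((r : ℝ) - 1) / ((n : ℝ) - 1)) /
          (1 - (1 - ((r : ℝ) - 1) / ((n : ℝ) - 1)) ^ t))
    ∧ (∀ n₁ n₂ : ℕ, 2 * r ≤ n₁ → r + t + 1 ≤ n₁ → n₁ ≤ n₂ →
        (Nat.choose (n₂ - 2) (r - 2) : ℝ) /
            ((Nat.choose (n₂ - 1) (r - 1) : ℝ) - (Nat.choose (n₂ - 1 - t) (r - 1) : ℝ)) ≤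
          (Nat.choose (n₁ - 2) (r - 2) : ℝ) /
            ((Nat.choose (n₁ - 1) (r - 1) : ℝ) - (Nat.choose (n₁ - 1 - t) (r - 1) : ℝ)))
    ∧ Filter.Tendsto
        (fun n : ℕ =>
          (Nat.choose (n - 2) (r - 2) : ℝ) /
            ((Nat.choose (n - 1) (r - 1) : ℝ) - (Nat.choose (n - 1 - t) (r - 1) : ℝ)))
        Filter.atTop (nhds (1 / (t : ℝ))) := by
  obtain ⟨k, rfl⟩ : ∃ k, r = k + 2 := ⟨r - 2, by omega⟩
  have hr1 : k + 2 - 1 = k + 1 := rfl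
  have hr2 : k + 2 - 2 = k := rfl
  rw [hr1, hr2]
  refine ⟨?_, ?_, ?_⟩
  · -- Part 1
    intro n h2r hrt
    have hkn : k + 1 ≤ n - 1 := by omega
    have hn1 : (0 : ℝ) < (n : ℝ) - 1 := by
      have : (2 : ℝ) ≤ (n : ℝ) := by exact_mod_cast (show 2 ≤ n by omega)
      linarith
    have hcastN : ((n - 1 : ℕ) : ℝ) = (n : ℝ) - 1 := by
      rw [Nat.cast_sub (by omega : 1 ≤ n), Nat.cast_one]
    rw [show (((k : ℕ) + 2 : ℕ) : ℝ) - 1 = (k : ℝ) + 1 by push_cast; ring]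
    set x : ℝ := ((k : ℝ) + 1) / ((n : ℝ) - 1) with hxdef
    have hx0 : 0 < x := by positivity
    have hx1 : x < 1 := by
      rw [hxdef, div_lt_one hn1]
      have : ((k : ℝ) + 3 : ℝ) ≤ (n : ℝ) := by exact_mod_cast (show k + 3 ≤ n by omega)
      linarith
    have hpow : (1 - x) ^ t < 1 := pow_lt_one₀ (by linarith) (by linarith) (by omega)
    have hpow0 : 0 ≤ (1 - x) ^ t := pow_nonneg (by linarith) t
    have hden : 0 < 1 - (1 - x) ^ t := by linarith
    have hC : (0 : ℝ) < Nat.choose (n - 1) (k + 1) := by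
      exact_mod_cast Nat.choose_pos hkn
    have hEB := srb_expBound (n - 1) k hkn t
    rw [hcastN] at hEB
    have hD' : (0 : ℝ) < (1 - (1 - x) ^ t) * Nat.choose (n - 1) (k + 1) := mul_pos hden hC
    have hDD : (1 - (1 - x) ^ t) * Nat.choose (n - 1) (k + 1)
        ≤ (Nat.choose (n - 1) (k + 1) : ℝ) - Nat.choose (n - 1 - t) (k + 1) := by
      have hexp : (1 - (1 - x) ^ t) * (Nat.choose (n - 1) (k + 1) : ℝ)
          = Nat.choose (n - 1) (k + 1) - (1 - x) ^ t * Nat.choose (n - 1) (k + 1) := by ring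
      rw [hexp]
      linarith
    have hnum : (Nat.choose (n - 2) k : ℝ) = x * Nat.choose (n - 1) (k + 1) := by
      have hid := Nat.add_one_mul_choose_eq (n - 2) k
      rw [show n - 2 + 1 = n - 1 by omega] at hid
      have hc := congrArg (fun x : ℕ => (x : ℝ)) hid
      push_cast [Nat.cast_sub (show 1 ≤ n by omega)] at hc
      rw [hxdef]
      field_simp
      linear_combination hc
    calc (Nat.choose (n - 2) k : ℝ) /
          ((Nat.choose (n - 1) (k + 1) : ℝ) - Nat.choose (n - 1 - t) (k + 1))
        ≤ (Nat.choose (n - 2) k : ℝ) / ((1 - (1 - x) ^ t) * Nat.choose (n - 1) (k + 1)) :=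
          div_le_div_of_nonneg_left (by positivity) hD' hDD
      _ = x / (1 - (1 - x) ^ t) := by
          rw [hnum, mul_comm (1 - (1 - x) ^ t) ((Nat.choose (n - 1) (k + 1) : ℝ)),
            mul_comm x ((Nat.choose (n - 1) (k + 1) : ℝ)),
            mul_div_mul_left _ _ hC.ne']
  · -- Part 2
    intro n₁ n₂ h2r h1 hle
    obtain ⟨d, rfl⟩ := Nat.exists_eq_add_of_le hle
    clear hle
    induction d with
    | zero => exact le_refl _
    | succ d ih =>
      exact le_trans (srb_step k t (n₁ + d) ht (by omega)) ih
  · -- Part 3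
    have htR : (t : ℝ) ≠ 0 := by exact_mod_cast (show t ≠ 0 by omega)
    have hg : Tendsto
        (fun n : ℕ => ∑ j ∈ Finset.range t, (Nat.choose (n - 2 - j) k : ℝ) / Nat.choose (n - 2) k)
        atTop (nhds t) := by
      have hts : (t : ℝ) = ∑ j ∈ Finset.range t, (1 : ℝ) := by simp
      rw [hts]
      refine tendsto_finset_sum _ fun j hj => ?_
      have hcomp := (srb_ratio_c k j).comp (tendsto_sub_atTop_nat (2 + j))
      refine hcomp.congr' ?_
      filter_upwards [eventually_ge_atTop (j + 2)] with n hn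
      show (Nat.choose (n - (2 + j)) k : ℝ) / Nat.choose (n - (2 + j) + j) k = _
      rw [show n - (2 + j) = n - 2 - j by omega, show n - 2 - j + j = n - 2 by omega]
    have hinv := hg.inv₀ htR
    rw [one_div]
    refine Tendsto.congr' ?_ hinv
    filter_upwards [eventually_ge_atTop (k + t + 4)] with n hn
    show (∑ j ∈ Finset.range t, (Nat.choose (n - 2 - j) k : ℝ) / Nat.choose (n - 2) k)⁻¹ = _
    rw [← Finset.sum_div, inv_div, srb_denomEq k t n (by omega)]
end

section
/- Let r ≥ 3 and n ≥ 2r, and let ℬ = F(r,n,{{1,r+1}}) ∪ F(r,n,{{2,3,r+2}}) ∪ ⋃_{s=3}^{r} 𝒜_{n,r,s}. If 𝒜 ⊆ Binom([n],r) is a compressed intersecting family with 𝒜 ⊄ 𝒮_{n,r} and 𝒜 ⊄ 𝒜_{n,r,2}, then 𝒜 ⊆ ℬ. -/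
open Finset

lemma nthEl_eq_get (A : Finset ℕ) (i : ℕ) (h1 : 1 ≤ i) (h2 : i ≤ A.card) :
    nthEl A i = (A.sort (· ≤ ·)).get ⟨i - 1, by rw [Finset.length_sort]; omega⟩ := by
  unfold nthEl
  exact List.getD_eq_get (l := A.sort (· ≤ ·)) (d := 0) (i := ⟨i - 1, by rw [Finset.length_sort]; omega⟩)

lemma nthEl_mem {A : Finset ℕ} {i : ℕ} (h1 : 1 ≤ i) (h2 : i ≤ A.card) : nthEl A i ∈ A := by
  rw [nthEl_eq_get A i h1 h2]
  rw [← Finset.mem_sort (· ≤ ·)]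
  exact List.get_mem _ _

lemma exists_nthEl {A : Finset ℕ} {x : ℕ} (hx : x ∈ A) :
    ∃ i, 1 ≤ i ∧ i ≤ A.card ∧ nthEl A i = x := by
  rw [← Finset.mem_sort (· ≤ ·)] at hx
  obtain ⟨k, hk⟩ := List.get_of_mem hx
  have hlen : (A.sort (· ≤ ·)).length = A.card := Finset.length_sort _
  have hk2 : (k : ℕ) < A.card := by have := k.2; omega
  refine ⟨k + 1, by omega, by omega, ?_⟩
  rw [nthEl_eq_get _ _ (by omega) (by omega)]
  simpa using hk

lemma nthEl_lt_nthEl {A : Finset ℕ} {i j : ℕ} (h1 : 1 ≤ i) (hij : i < j) (hj : j ≤ A.card) :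
    nthEl A i < nthEl A j := by
  rw [nthEl_eq_get A i h1 (by omega), nthEl_eq_get A j (by omega) hj]
  exact (Finset.sortedLT_sort A).pairwise.rel_get_of_lt (by simp [Fin.lt_def]; omega)

lemma nthEl_le_nthEl {A : Finset ℕ} {i j : ℕ} (h1 : 1 ≤ i) (hij : i ≤ j) (hj : j ≤ A.card) :
    nthEl A i ≤ nthEl A j := by
  rcases Nat.eq_or_lt_of_le hij with rfl | h
  · exact le_refl _
  · exact le_of_lt (nthEl_lt_nthEl h1 h hj)

lemma nthEl_add_le {A : Finset ℕ} {i j : ℕ} (h1 : 1 ≤ i) (hij : i ≤ j) (hj : j ≤ A.card) :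
    nthEl A i + (j - i) ≤ nthEl A j := by
  induction j with
  | zero => omega
  | succ m ih =>
    rcases Nat.eq_or_lt_of_le hij with rfl | h
    · simp
    · have hm : i ≤ m := by omega
      have := ih hm (by omega)
      have h2 := nthEl_lt_nthEl (i := m) (j := m+1) (A := A) (by omega) (by omega) hj
      omega

lemma count_le_of_nthEl_le {A : Finset ℕ} {i m : ℕ} (h1 : 1 ≤ i) (h2 : i ≤ A.card)
    (h : nthEl A i ≤ m) : i ≤ (A.filter (· ≤ m)).card := by
  have hsub : (Finset.Icc 1 i).image (nthEl A) ⊆ A.filter (· ≤ m) := by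
    intro x hx
    rw [Finset.mem_image] at hx
    obtain ⟨k, hk, rfl⟩ := hx
    rw [Finset.mem_Icc] at hk
    rw [Finset.mem_filter]
    exact ⟨nthEl_mem hk.1 (by omega), le_trans (nthEl_le_nthEl hk.1 hk.2 h2) h⟩
  have hinj : Set.InjOn (nthEl A) (Finset.Icc 1 i) := by
    intro a ha b hb hab
    simp only [Finset.coe_Icc, Set.mem_Icc] at ha hb
    by_contra hne
    rcases Nat.lt_or_ge a b with hlt | hge
    · have := nthEl_lt_nthEl (A := A) ha.1 hlt (by omega); omega
    · have := nthEl_lt_nthEl (A := A) hb.1 (by omega : b < a) (by omega); omega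
  have := Finset.card_image_of_injOn hinj
  have hIcc : (Finset.Icc 1 i).card = i := by rw [Nat.card_Icc]; omega
  have := Finset.card_le_card hsub
  omega

lemma count_lt_of_lt_nthEl {A : Finset ℕ} {i m : ℕ} (h1 : 1 ≤ i) (h2 : i ≤ A.card)
    (h : m < nthEl A i) : (A.filter (· ≤ m)).card < i := by
  have hsub : A.filter (· ≤ m) ⊆ (Finset.Icc 1 (i-1)).image (nthEl A) := by
    intro x hx
    rw [Finset.mem_filter] at hx
    obtain ⟨hxA, hxm⟩ := hx
    obtain ⟨k, hk1, hk2, rfl⟩ := exists_nthEl hxA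
    have hki : k ≤ i - 1 := by
      by_contra hc
      push_neg at hc
      have := nthEl_le_nthEl h1 (by omega : i ≤ k) hk2
      omega
    rw [Finset.mem_image]
    exact ⟨k, Finset.mem_Icc.mpr ⟨hk1, hki⟩, rfl⟩
  have := Finset.card_le_card hsub
  have := Finset.card_image_le (s := Finset.Icc 1 (i-1)) (f := nthEl A)
  have hIcc : (Finset.Icc 1 (i-1)).card = i - 1 := by rw [Nat.card_Icc]; omega
  omega

lemma nthEl_le_of_count {A : Finset ℕ} {i m : ℕ} (h1 : 1 ≤ i)
    (h : i ≤ (A.filter (· ≤ m)).card) : nthEl A i ≤ m := by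
  have h2 : i ≤ A.card := le_trans h (Finset.card_le_card (Finset.filter_subset _ _))
  by_contra hc
  push_neg at hc
  have := count_lt_of_lt_nthEl h1 h2 hc
  omega

lemma lt_nthEl_of_count {A : Finset ℕ} {i m : ℕ} (h1 : 1 ≤ i) (h2 : i ≤ A.card)
    (h : (A.filter (· ≤ m)).card < i) : m < nthEl A i := by
  by_contra hc
  push_neg at hc
  have := count_le_of_nthEl_le h1 h2 hc
  omega

lemma nthEl_Icc {a b i : ℕ} (ha : 1 ≤ a) (h1 : 1 ≤ i) (h2 : i ≤ b + 1 - a) :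
    nthEl (Finset.Icc a b) i = a + i - 1 := by
  have hcard : (Finset.Icc a b).card = b + 1 - a := Nat.card_Icc a b
  apply le_antisymm
  · apply nthEl_le_of_count h1
    have : (Finset.Icc a b).filter (· ≤ a + i - 1) = Finset.Icc a (a + i - 1) := by
      ext x
      simp only [Finset.mem_filter, Finset.mem_Icc]
      omega
    rw [this, Nat.card_Icc]
    omega
  · have : a + i - 2 < nthEl (Finset.Icc a b) i := by
      apply lt_nthEl_of_count h1 (by omega)
      have : (Finset.Icc a b).filter (· ≤ a + i - 2) = Finset.Icc a (a + i - 2) := by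
        ext x
        simp only [Finset.mem_filter, Finset.mem_Icc]
        omega
      rw [this, Nat.card_Icc]
      omega
    omega

lemma sort_pair {a b : ℕ} (h : a < b) : ({a, b} : Finset ℕ).sort (· ≤ ·) = [a, b] := by
  have he : ({a, b} : Finset ℕ) = ([a, b] : List ℕ).toFinset := by
    simp
  rw [he]
  rw [List.toFinset_sort _ (by simp [Nat.ne_of_lt h])]
  simp [List.pairwise_cons, le_of_lt h]

lemma sort_triple {a b c : ℕ} (hab : a < b) (hbc : b < c) :
    ({a, b, c} : Finset ℕ).sort (· ≤ ·) = [a, b, c] := by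
  have he : ({a, b, c} : Finset ℕ) = ([a, b, c] : List ℕ).toFinset := by
    simp
  rw [he]
  rw [List.toFinset_sort _ (by simp [Nat.ne_of_lt hab, Nat.ne_of_lt hbc,
    Nat.ne_of_lt (lt_trans hab hbc)])]
  simp [List.pairwise_cons, le_of_lt hab, le_of_lt hbc, le_of_lt (lt_trans hab hbc)]

lemma nthEl_pair1 {a b : ℕ} (h : a < b) : nthEl ({a, b} : Finset ℕ) 1 = a := by
  unfold nthEl; rw [sort_pair h]; rfl

lemma nthEl_pair2 {a b : ℕ} (h : a < b) : nthEl ({a, b} : Finset ℕ) 2 = b := by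
  unfold nthEl; rw [sort_pair h]; rfl

lemma nthEl_triple1 {a b c : ℕ} (hab : a < b) (hbc : b < c) :
    nthEl ({a, b, c} : Finset ℕ) 1 = a := by
  unfold nthEl; rw [sort_triple hab hbc]; rfl

lemma nthEl_triple2 {a b c : ℕ} (hab : a < b) (hbc : b < c) :
    nthEl ({a, b, c} : Finset ℕ) 2 = b := by
  unfold nthEl; rw [sort_triple hab hbc]; rfl

lemma nthEl_triple3 {a b c : ℕ} (hab : a < b) (hbc : b < c) :
    nthEl ({a, b, c} : Finset ℕ) 3 = c := by
  unfold nthEl; rw [sort_triple hab hbc]; rfl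

lemma card_pair' {a b : ℕ} (h : a < b) : ({a, b} : Finset ℕ).card = 2 :=
  Finset.card_pair (Nat.ne_of_lt h)

lemma card_triple {a b c : ℕ} (hab : a < b) (hbc : b < c) :
    ({a, b, c} : Finset ℕ).card = 3 := by
  rw [Finset.card_insert_of_notMem (by simp; omega), Finset.card_pair (by omega)]

lemma mem_binomF {n r : ℕ} {A : Finset ℕ} :
    A ∈ binomF n r ↔ A ⊆ Finset.Icc 1 n ∧ A.card = r := Finset.mem_powersetCard

lemma one_le_nthEl {n r : ℕ} {A : Finset ℕ} (hA : A ∈ binomF n r) {i : ℕ}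
    (h1 : 1 ≤ i) (h2 : i ≤ r) : 1 ≤ nthEl A i := by
  rw [mem_binomF] at hA
  have := hA.1 (nthEl_mem h1 (by omega))
  rw [Finset.mem_Icc] at this
  exact this.1

lemma le_nthEl {n r : ℕ} {A : Finset ℕ} (hA : A ∈ binomF n r) {i : ℕ}
    (h1 : 1 ≤ i) (h2 : i ≤ r) : i ≤ nthEl A i := by
  have hc : A.card = r := (mem_binomF.mp hA).2
  have h0 := one_le_nthEl hA (le_refl 1) (by omega)
  have := nthEl_add_le (A := A) (i := 1) (j := i) (le_refl 1) h1 (by omega)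
  omega

lemma frankl_lemma {n r : ℕ} (hr : 1 ≤ r) (hn : 2*r ≤ n) {𝒜 : Finset (Finset ℕ)}
    (h𝒜 : 𝒜 ⊆ binomF n r) (hcomp : CompressedF n r 𝒜) (hint : IntersectingF 𝒜)
    {A : Finset ℕ} (hA : A ∈ 𝒜) : ∃ i, 1 ≤ i ∧ i ≤ r ∧ nthEl A i ≤ 2*i - 1 := by
  by_contra hcon
  push_neg at hcon
  have hge : ∀ i, 1 ≤ i → i ≤ r → 2*i ≤ nthEl A i := by
    intro i hi1 hi2
    have := hcon i hi1 hi2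
    omega
  obtain ⟨hAsub, hAcard⟩ := mem_binomF.mp (h𝒜 hA)
  set Bh : Finset ℕ := (Finset.Icc 1 (2*r)) \ A with hBh
  -- count lower bound in Bh
  have hcount : ∀ i, 1 ≤ i → i ≤ r → i ≤ (Bh.filter (· ≤ nthEl A i)).card := by
    intro i hi1 hi2
    set a := nthEl A i with ha
    set m := min (2*r) a with hm
    have hm2i : 2*i ≤ m := by
      have := hge i hi1 hi2
      omega
    have hAcount : (A.filter (· ≤ m)).card ≤ i := by
      rcases Nat.eq_or_lt_of_le hi2 with rfl | hlt
      · exact le_trans (Finset.card_le_card (Finset.filter_subset _ _)) (le_of_eq hAcard)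
      · have hst : a < nthEl A (i+1) := nthEl_lt_nthEl hi1 (by omega) (by omega)
        have := count_lt_of_lt_nthEl (A := A) (i := i+1) (m := m) (by omega) (by omega)
          (by omega)
        omega
    have hsub : (Finset.Icc 1 m) \ A ⊆ Bh.filter (· ≤ a) := by
      intro x hx
      rw [Finset.mem_sdiff, Finset.mem_Icc] at hx
      rw [Finset.mem_filter, hBh, Finset.mem_sdiff, Finset.mem_Icc]
      refine ⟨⟨⟨hx.1.1, by omega⟩, hx.2⟩, by omega⟩
    have hinter : (Finset.Icc 1 m) ∩ A ⊆ A.filter (· ≤ m) := by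
      intro x hx
      rw [Finset.mem_inter, Finset.mem_Icc] at hx
      rw [Finset.mem_filter]
      exact ⟨hx.2, hx.1.2⟩
    have hsd : ((Finset.Icc 1 m) \ A).card = m - ((Finset.Icc 1 m) ∩ A).card := by
      rw [← Finset.sdiff_inter_self_left, Finset.card_sdiff_of_subset Finset.inter_subset_left,
        Nat.card_Icc]
      omega
    have h1 := Finset.card_le_card hsub
    have h2 := Finset.card_le_card hinter
    omega
  have hBhcard : r ≤ Bh.card := by
    have := hcount r hr (le_refl r)
    exact le_trans this (Finset.card_le_card (Finset.filter_subset _ _))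
  -- B := first r elements of Bh
  set l : List ℕ := Bh.sort (· ≤ ·) with hl
  have hllen : l.length = Bh.card := Finset.length_sort _
  set B : Finset ℕ := (l.take r).toFinset with hB
  have htnd : (l.take r).Nodup := (Finset.sort_nodup _ _).sublist (List.take_sublist _ _)
  have htsorted : (l.take r).Pairwise (· ≤ ·) :=
    List.Pairwise.sublist (List.take_sublist _ _) (Finset.pairwise_sort _ _)
  have hBsort : B.sort (· ≤ ·) = l.take r := (List.toFinset_sort _ htnd).mpr htsorted
  have hBcard : B.card = r := by
    rw [hB, List.toFinset_card_of_nodup htnd, List.length_take]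
    omega
  have hBsubBh : B ⊆ Bh := by
    intro x hx
    rw [hB, List.mem_toFinset] at hx
    have := List.mem_of_mem_take hx
    rwa [hl, Finset.mem_sort] at this
  have hBnth : ∀ i, 1 ≤ i → i ≤ r → nthEl B i = nthEl Bh i := by
    intro i hi1 hi2
    unfold nthEl
    rw [hBsort]
    rw [List.getD_eq_getElem _ _ (by rw [List.length_take]; omega)]
    rw [List.getD_eq_getElem _ _ (by rw [← hl]; omega)]
    rw [List.getElem_take]
  have hBbinom : B ∈ binomF n r := by
    rw [mem_binomF]
    refine ⟨?_, hBcard⟩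
    intro x hx
    have := hBsubBh hx
    rw [hBh, Finset.mem_sdiff, Finset.mem_Icc] at this
    rw [Finset.mem_Icc]
    omega
  have hBle : SetLE B A := by
    refine ⟨by omega, ?_⟩
    intro i hi
    rw [Finset.mem_Icc, hBcard] at hi
    rw [hBnth i hi.1 hi.2]
    exact nthEl_le_of_count hi.1 (hcount i hi.1 hi.2)
  have hBmem : B ∈ 𝒜 := hcomp A hA B hBbinom hBle
  obtain ⟨x, hx⟩ := hint A hA B hBmem
  rw [Finset.mem_inter] at hx
  have := hBsubBh hx.2
  rw [hBh, Finset.mem_sdiff] at this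
  exact this.2 hx.1

lemma E_mem {n r : ℕ} (hr : 1 ≤ r) (hn : r + 1 ≤ n) {𝒜 : Finset (Finset ℕ)}
    (h𝒜 : 𝒜 ⊆ binomF n r) (hcomp : CompressedF n r 𝒜)
    {A0 : Finset ℕ} (hA0 : A0 ∈ 𝒜) (h1 : 1 ∉ A0) : Finset.Icc 2 (r+1) ∈ 𝒜 := by
  have hA0b := mem_binomF.mp (h𝒜 hA0)
  have hcard : (Finset.Icc 2 (r+1)).card = r := by rw [Nat.card_Icc]; omega
  have hEb : Finset.Icc 2 (r+1) ∈ binomF n r := by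
    rw [mem_binomF]
    refine ⟨fun x hx => ?_, hcard⟩
    rw [Finset.mem_Icc] at hx ⊢
    omega
  apply hcomp A0 hA0 _ hEb
  refine ⟨by rw [hcard, hA0b.2], ?_⟩
  intro i hi
  rw [Finset.mem_Icc, hcard] at hi
  rw [nthEl_Icc (by omega) hi.1 (by omega)]
  -- need i + 1 ≤ nthEl A0 i
  have h2 : 2 ≤ nthEl A0 1 := by
    have hm := nthEl_mem (A := A0) (le_refl 1) (by omega)
    have hp := one_le_nthEl (h𝒜 hA0) (le_refl 1) (by omega)
    rcases Nat.eq_or_lt_of_le hp with heq | hlt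
    · exact absurd (heq ▸ hm) h1
    · omega
  have := nthEl_add_le (A := A0) (i := 1) (j := i) (le_refl 1) hi.1 (by omega)
  omega

lemma D_mem {n r : ℕ} (hr : 2 ≤ r) (hn : r + 2 ≤ n) {𝒜 : Finset (Finset ℕ)}
    (h𝒜 : 𝒜 ⊆ binomF n r) (hcomp : CompressedF n r 𝒜)
    {A1 : Finset ℕ} (hA1 : A1 ∈ 𝒜) (h34 : 3 ≤ nthEl A1 1 ∨ 4 ≤ nthEl A1 2) :
    insert 1 (Finset.Icc 4 (r+2)) ∈ 𝒜 := by
  have hA1b := mem_binomF.mp (h𝒜 hA1)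
  set D : Finset ℕ := insert 1 (Finset.Icc 4 (r+2)) with hD
  have hcard : D.card = r := by
    rw [hD, Finset.card_insert_of_notMem (by rw [Finset.mem_Icc]; omega), Nat.card_Icc]
    omega
  have hDb : D ∈ binomF n r := by
    rw [mem_binomF]
    refine ⟨fun x hx => ?_, hcard⟩
    rw [hD, Finset.mem_insert, Finset.mem_Icc] at hx
    rw [Finset.mem_Icc]
    omega
  have hlow : ∀ i, 2 ≤ i → i ≤ r → i + 2 ≤ nthEl A1 i := by
    intro i hi2 hir
    rcases h34 with h3 | h4
    · have := nthEl_add_le (A := A1) (i := 1) (j := i) (le_refl 1) (by omega) (by omega)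
      omega
    · have := nthEl_add_le (A := A1) (i := 2) (j := i) (by omega) hi2 (by omega)
      omega
  apply hcomp A1 hA1 _ hDb
  refine ⟨by rw [hcard, hA1b.2], ?_⟩
  intro i hi
  rw [Finset.mem_Icc, hcard] at hi
  rcases Nat.lt_or_ge i 2 with hi1 | hi2
  · have hieq : i = 1 := by omega
    subst hieq
    have : nthEl D 1 ≤ 1 := by
      apply nthEl_le_of_count (le_refl 1)
      have h1D : (1 : ℕ) ∈ D.filter (· ≤ 1) := by
        rw [Finset.mem_filter, hD]
        exact ⟨Finset.mem_insert_self _ _, le_refl 1⟩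
      exact Finset.card_pos.mpr ⟨1, h1D⟩
    have := one_le_nthEl (h𝒜 hA1) (le_refl 1) (by omega)
    omega
  · have hle : nthEl D i ≤ i + 2 := by
      apply nthEl_le_of_count (by omega)
      have hfe : D.filter (· ≤ i + 2) = insert 1 (Finset.Icc 4 (i+2)) := by
        ext x
        rw [Finset.mem_filter, hD, Finset.mem_insert, Finset.mem_insert,
          Finset.mem_Icc, Finset.mem_Icc]
        omega
      rw [hfe, Finset.card_insert_of_notMem (by rw [Finset.mem_Icc]; omega), Nat.card_Icc]
      omega
    have := hlow i hi2 hi.2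
    omega


/-- Proposition `l.nicegens`: for `r ≥ 3`, `n ≥ 2r`, set
`ℬ = F(r,n,{{1,r+1}}) ∪ F(r,n,{{2,3,r+2}}) ∪ ⋃_{s=3}^{r} 𝒜_{n,r,s}`.
Every compressed intersecting family `𝒜 ⊆ Binom([n],r)` with `𝒜 ⊄ 𝒮_{n,r}` and
`𝒜 ⊄ 𝒜_{n,r,2}` satisfies `𝒜 ⊆ ℬ`. -/
theorem subset_of_nice_generators (n r : ℕ) (hr : 3 ≤ r) (hn : 2 * r ≤ n)
    (𝒜 : Finset (Finset ℕ)) (h𝒜 : 𝒜 ⊆ binomF n r)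
    (hcomp : CompressedF n r 𝒜) (hint : IntersectingF 𝒜)
    (hS : ¬ 𝒜 ⊆ starF n r) (hA2 : ¬ 𝒜 ⊆ Anrs n r 2) :
    𝒜 ⊆ genF r n {({1, r + 1} : Finset ℕ)} ∪ genF r n {({2, 3, r + 2} : Finset ℕ)} ∪
      (Finset.Icc 3 r).biUnion (fun s => Anrs n r s) := by
  -- extract E
  obtain ⟨A0, hA0, hA0S⟩ := Finset.not_subset.mp hS
  have h1A0 : 1 ∉ A0 := by
    intro h
    exact hA0S (Finset.mem_filter.mpr ⟨h𝒜 hA0, h⟩)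
  have hE : Finset.Icc 2 (r+1) ∈ 𝒜 := E_mem (by omega) (by omega) h𝒜 hcomp hA0 h1A0
  -- extract D
  obtain ⟨A1, hA1, hA1n⟩ := Finset.not_subset.mp hA2
  have hA1b := mem_binomF.mp (h𝒜 hA1)
  have h34 : 3 ≤ nthEl A1 1 ∨ 4 ≤ nthEl A1 2 := by
    by_contra hc
    push_neg at hc
    apply hA1n
    rw [Anrs, genF, Finset.mem_filter]
    refine ⟨h𝒜 hA1, Finset.Icc 2 3, Finset.mem_singleton_self _, ?_⟩
    have hc23 : (Finset.Icc 2 3).card = 2 := by rw [Nat.card_Icc]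
    refine ⟨by rw [hc23, hA1b.2]; omega, ?_⟩
    intro i hi
    rw [Finset.mem_Icc, hc23] at hi
    obtain ⟨hia, hib⟩ := hi
    rw [nthEl_Icc (by omega) hia (by omega)]
    interval_cases i
    · omega
    · omega
  have hD : insert 1 (Finset.Icc 4 (r+2)) ∈ 𝒜 :=
    D_mem (by omega) (by omega) h𝒜 hcomp hA1 h34
  -- main argument
  intro A hA
  have hAb := mem_binomF.mp (h𝒜 hA)
  obtain ⟨i, hi1, hir, hile⟩ := frankl_lemma (by omega) hn h𝒜 hcomp hint hA
  by_cases hs : ∃ s, 3 ≤ s ∧ s ≤ r ∧ nthEl A s ≤ 2*s - 1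
  · obtain ⟨s, hs3, hsr, hsle⟩ := hs
    apply Finset.mem_union_right
    rw [Finset.mem_biUnion]
    refine ⟨s, Finset.mem_Icc.mpr ⟨hs3, hsr⟩, ?_⟩
    rw [Anrs, genF, Finset.mem_filter]
    refine ⟨h𝒜 hA, Finset.Icc s (2*s-1), Finset.mem_singleton_self _, ?_⟩
    have hcs : (Finset.Icc s (2*s-1)).card = s := by rw [Nat.card_Icc]; omega
    refine ⟨by rw [hcs, hAb.2]; omega, ?_⟩
    intro j hj
    rw [Finset.mem_Icc, hcs] at hj
    rw [nthEl_Icc (by omega) hj.1 (by omega)]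
    have := nthEl_add_le (A := A) hj.1 hj.2 (by omega)
    omega
  · push_neg at hs
    have hi2 : i ≤ 2 := by
      by_contra hc
      have := hs i (by omega) hir
      omega
    rcases Nat.lt_or_ge i 2 with hieq1 | hieq2
    · -- i = 1 : nthEl A 1 = 1
      have hieq : i = 1 := by omega
      subst hieq
      have ha1 : nthEl A 1 = 1 := by
        have := one_le_nthEl (h𝒜 hA) (le_refl 1) (by omega)
        omega
      have ha2 : nthEl A 2 ≤ r + 1 := by
        by_contra hc
        push_neg at hc
        obtain ⟨x, hx⟩ := hint A hA _ hE
        rw [Finset.mem_inter] at hx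
        obtain ⟨j, hj1, hj2, rfl⟩ := exists_nthEl hx.1
        have hxE := hx.2
        rw [Finset.mem_Icc] at hxE
        rcases Nat.lt_or_ge j 2 with hj' | hj'
        · have : j = 1 := by omega
          subst this
          omega
        · have := nthEl_le_nthEl (A := A) (i := 2) (by omega) hj' hj2
          omega
      apply Finset.mem_union_left
      apply Finset.mem_union_left
      rw [genF, Finset.mem_filter]
      refine ⟨h𝒜 hA, {1, r+1}, Finset.mem_singleton_self _, ?_⟩
      have hcp : ({1, r+1} : Finset ℕ).card = 2 := card_pair' (by omega)
      refine ⟨by rw [hcp, hAb.2]; omega, ?_⟩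
      intro j hj
      rw [Finset.mem_Icc, hcp] at hj
      obtain ⟨hja, hjb⟩ := hj
      interval_cases j
      · rw [nthEl_pair1 (by omega)]; omega
      · rw [nthEl_pair2 (by omega)]; omega
    · -- i = 2 : nthEl A 2 ≤ 3
      have hieq : i = 2 := by omega
      subst hieq
      have ha2 : nthEl A 2 ≤ 3 := by omega
      have ha1 : nthEl A 1 ≤ 2 := by
        have := nthEl_lt_nthEl (A := A) (le_refl 1) (by omega : 1 < 2) (by omega)
        omega
      rcases Nat.eq_or_lt_of_le (one_le_nthEl (h𝒜 hA) (le_refl 1) (by omega)) with h1 | h1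
      · -- nthEl A 1 = 1
        apply Finset.mem_union_left
        apply Finset.mem_union_left
        rw [genF, Finset.mem_filter]
        refine ⟨h𝒜 hA, {1, r+1}, Finset.mem_singleton_self _, ?_⟩
        have hcp : ({1, r+1} : Finset ℕ).card = 2 := card_pair' (by omega)
        refine ⟨by rw [hcp, hAb.2]; omega, ?_⟩
        intro j hj
        rw [Finset.mem_Icc, hcp] at hj
        obtain ⟨hja, hjb⟩ := hj
        interval_cases j
        · rw [nthEl_pair1 (by omega)]; omega
        · rw [nthEl_pair2 (by omega)]; omega
      · -- nthEl A 1 = 2, nthEl A 2 = 3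
        have ha1e : nthEl A 1 = 2 := by omega
        have ha2e : nthEl A 2 = 3 := by
          have := nthEl_lt_nthEl (A := A) (le_refl 1) (by omega : 1 < 2) (by omega)
          omega
        have ha3 : nthEl A 3 ≤ r + 2 := by
          by_contra hc
          push_neg at hc
          obtain ⟨x, hx⟩ := hint A hA _ hD
          rw [Finset.mem_inter] at hx
          obtain ⟨j, hj1, hj2, rfl⟩ := exists_nthEl hx.1
          have hxD := hx.2
          rw [Finset.mem_insert, Finset.mem_Icc] at hxD
          rcases Nat.lt_or_ge j 3 with hj' | hj'
          · interval_cases j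
            · omega
            · omega
          · have := nthEl_le_nthEl (A := A) (i := 3) (by omega) hj' hj2
            omega
        apply Finset.mem_union_left
        apply Finset.mem_union_right
        rw [genF, Finset.mem_filter]
        refine ⟨h𝒜 hA, {2, 3, r+2}, Finset.mem_singleton_self _, ?_⟩
        have hct : ({2, 3, r+2} : Finset ℕ).card = 3 := card_triple (by omega) (by omega)
        refine ⟨by rw [hct, hAb.2]; omega, ?_⟩
        intro j hj
        rw [Finset.mem_Icc, hct] at hj
        obtain ⟨hja, hjb⟩ := hj
        interval_cases j
        · rw [nthEl_triple1 (by omega) (by omega)]; omega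
        · rw [nthEl_triple2 (by omega) (by omega)]; omega
        · rw [nthEl_triple3 (by omega) (by omega)]; omega
end
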